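/- Suppose 0 < α < 1 and either (-j < a + c < -j + 1 and (a - c < -j or c - a < -j + 1)) or ((a + c < -N + 1 or 0 < a + c) and 0 < c - a < 1). Then the even-case para-Racah recurrence coefficients satisfy u_n > 0 for all n = 1, 2, …, N. -/
import Mathlib


open Filter Topology Polynomial

noncomputable section

/-- The recurrence coefficient `bₙ` of the para-Racah polynomials, even case `N = 2j`. -/
def bEven (j : ℕ) (a c : ℝ) (n : ℕ) : ℝ :=
  ((n : ℝ) - 2 * j) * ((n : ℝ) + a + c) * ((n : ℝ) + a - c - j + 1) /
      (2 * (2 * (n : ℝ) + 1 - 2 * j)) +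
    (n : ℝ) * ((n : ℝ) - 2 * j - a - c) * ((n : ℝ) - j - 1 + c - a) /
      (2 * (2 * (n : ℝ) - 1 - 2 * j)) - a ^ 2

/-- The recurrence coefficient `uₙ` of the para-Racah polynomials, even case `N = 2j`. -/
def uEven (j : ℕ) (a c α : ℝ) (n : ℕ) : ℝ :=
  if n = j then
    -(1 - α) * (j : ℝ) * ((j : ℝ) + 1) * (a - c) * (a - c + 1) * (a + c + j - 1) * (a + c + j) / 2
  else if n = j + 1 then
    -α * (j : ℝ) * ((j : ℝ) + 1) * (a - c) * (a - c + 1) * (a + c + j - 1) * (a + c + j) / 2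
  else
    (n : ℝ) * (2 * (j : ℝ) - n + 1) * (a + c + n - 1) * (a - c + j - n + 1)
        * (-a + c + j - n) * (a + c + 2 * j - n) /
      (4 * (2 * (j : ℝ) - 2 * n + 1) ^ 2)

theorem uEven_pos (j : ℕ) (hj : 1 ≤ j) (a c α : ℝ)
    (hα₀ : 0 < α) (hα₁ : α < 1)
    (hcase :
      (-(j : ℝ) < a + c ∧ a + c < -(j : ℝ) + 1 ∧ (a - c < -(j : ℝ) ∨ c - a < -(j : ℝ) + 1)) ∨
      ((a + c < -(2 * (j : ℝ)) + 1 ∨ 0 < a + c) ∧ 0 < c - a ∧ c - a < 1)) :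
    ∀ n : ℕ, 1 ≤ n → n ≤ 2 * j → 0 < uEven j a c α n := by
  have hj' : (1 : ℝ) ≤ (j : ℝ) := by exact_mod_cast hj
  -- sign of (a-c)(a-c+1)(a+c+j-1)(a+c+j)
  have hQR : (a - c) * (a - c + 1) * ((a + c + j - 1) * (a + c + j)) < 0 := by
    rcases hcase with ⟨hs1, hs2, hd⟩ | ⟨hs, hd1, hd2⟩
    · have hR : (a + c + j - 1) * (a + c + j) < 0 :=
        mul_neg_of_neg_of_pos (by linarith) (by linarith)
      have hQ : 0 < (a - c) * (a - c + 1) := by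
        rcases hd with hd | hd
        · exact mul_pos_of_neg_of_neg (by linarith) (by linarith)
        · exact mul_pos (by linarith) (by linarith)
      exact mul_neg_of_pos_of_neg hQ hR
    · have hQ : (a - c) * (a - c + 1) < 0 :=
        mul_neg_of_neg_of_pos (by linarith) (by linarith)
      have hR : 0 < (a + c + j - 1) * (a + c + j) := by
        rcases hs with hs | hs
        · exact mul_pos_of_neg_of_neg (by linarith) (by linarith)
        · exact mul_pos (by linarith) (by linarith)
      exact mul_neg_of_neg_of_pos hQ hR
  intro n hn1 hn2
  have hx1 : (1 : ℝ) ≤ (n : ℝ) := by exact_mod_cast hn1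
  have hx2 : (n : ℝ) ≤ 2 * (j : ℝ) := by
    have : (n : ℝ) ≤ ((2 * j : ℕ) : ℝ) := by exact_mod_cast hn2
    simpa [Nat.cast_mul] using this
  have hxj : (n : ℝ) ≤ (j : ℝ) ∨ (j : ℝ) + 1 ≤ (n : ℝ) := by
    rcases le_or_gt n j with h | h
    · exact Or.inl (by exact_mod_cast h)
    · exact Or.inr (by exact_mod_cast h)
  by_cases hnj : n = j
  · subst hnj
    unfold uEven
    rw [if_pos rfl]
    have h1 : 0 < 1 - α := by linarith
    have h2 : 0 < (n : ℝ) * ((n : ℝ) + 1) := mul_pos (by linarith) (by linarith)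
    have h3 : 0 < -((a - c) * (a - c + 1) * ((a + c + n - 1) * (a + c + n))) := by linarith
    have hp := mul_pos (mul_pos h1 h2) h3
    have heq : -(1 - α) * (n : ℝ) * ((n : ℝ) + 1) * (a - c) * (a - c + 1) * (a + c + n - 1)
        * (a + c + n) / 2
        = (1 - α) * ((n : ℝ) * ((n : ℝ) + 1))
          * -((a - c) * (a - c + 1) * ((a + c + n - 1) * (a + c + n))) / 2 := by ring
    rw [heq]
    linarith [hp]
  · by_cases hnj1 : n = j + 1
    · subst hnj1
      unfold uEven
      rw [if_neg (by omega : ¬ j + 1 = j), if_pos rfl]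
      have h2 : 0 < (j : ℝ) * ((j : ℝ) + 1) := mul_pos (by linarith) (by linarith)
      have h3 : 0 < -((a - c) * (a - c + 1) * ((a + c + j - 1) * (a + c + j))) := by linarith
      have hp := mul_pos (mul_pos hα₀ h2) h3
      have heq : -α * (j : ℝ) * ((j : ℝ) + 1) * (a - c) * (a - c + 1) * (a + c + j - 1)
          * (a + c + j) / 2
          = α * ((j : ℝ) * ((j : ℝ) + 1))
            * -((a - c) * (a - c + 1) * ((a + c + j - 1) * (a + c + j))) / 2 := by ring
      rw [heq]
      linarith [hp]
    · simp only [uEven, if_neg hnj, if_neg hnj1]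
      set x : ℝ := (n : ℝ) with hxdef
      have hP2P3 : 0 < ((a + c + x - 1) * (a + c + 2 * j - x))
          * ((a - c + j - x + 1) * (-a + c + j - x)) := by
        rcases hcase with ⟨hs1, hs2, hd⟩ | ⟨hs, hd1, hd2⟩
        · have hP2 : (a + c + x - 1) * (a + c + 2 * j - x) < 0 := by
            rcases hxj with h | h
            · exact mul_neg_of_neg_of_pos (by linarith) (by linarith)
            · exact mul_neg_of_pos_of_neg (by linarith) (by linarith)
          have hP3 : (a - c + j - x + 1) * (-a + c + j - x) < 0 := by
            rcases hd with hd | hd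
            · exact mul_neg_of_neg_of_pos (by linarith) (by linarith)
            · exact mul_neg_of_pos_of_neg (by linarith) (by linarith)
          exact mul_pos_of_neg_of_neg hP2 hP3
        · have hP2 : 0 < (a + c + x - 1) * (a + c + 2 * j - x) := by
            rcases hs with hs | hs
            · exact mul_pos_of_neg_of_neg (by linarith) (by linarith)
            · exact mul_pos (by linarith) (by linarith)
          have hP3 : 0 < (a - c + j - x + 1) * (-a + c + j - x) := by
            rcases hxj with h | h
            · exact mul_pos (by linarith) (by linarith)
            · exact mul_pos_of_neg_of_neg (by linarith) (by linarith)
          exact mul_pos hP2 hP3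
      have hnum : 0 < x * (2 * (j : ℝ) - x + 1) * (a + c + x - 1) * (a - c + j - x + 1)
          * (-a + c + j - x) * (a + c + 2 * j - x) := by
        have h12 : 0 < x * (2 * (j : ℝ) - x + 1) := mul_pos (by linarith) (by linarith)
        have hp := mul_pos h12 hP2P3
        have heq : x * (2 * (j : ℝ) - x + 1) * (a + c + x - 1) * (a - c + j - x + 1)
            * (-a + c + j - x) * (a + c + 2 * j - x)
            = x * (2 * (j : ℝ) - x + 1) * (((a + c + x - 1) * (a + c + 2 * j - x))
              * ((a - c + j - x + 1) * (-a + c + j - x))) := by ring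
        rw [heq]
        exact hp
      have hden : 0 < 4 * (2 * (j : ℝ) - 2 * x + 1) ^ 2 := by
        rcases hxj with h | h
        · nlinarith
        · nlinarith
      exact div_pos hnum hden
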